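/- Let S be a nonempty finite set and n a natural number. Let p and q be probability mass functions on the finite type Fin n → S. Then there exists a probability mass function r on (Fin n → S) × (Fin n → S) whose first marginal is p and whose second marginal is q, such that r({(x, y) : x ≠ y}) ≤ |S|^n · max_{α : Fin n → S} |p(α) − q(α)|. Consequently, for each coordinate i, r({(x, y) : x(i) ≠ y(i)}) ≤ |S|^n · max_α |p(α) − q(α)|. -/

import Mathlib

/-!
The maximal coupling puts the common mass `min p q` on the diagonal and couples the excesses
`(p - q)₊` and `(q - p)₊` independently; both have total mass the total variation distance
`∑ (p - q)₊`. Its two coordinates can differ only on the excess part, so with probability at most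
`∑ (p - q)₊ ≤ ∑ |p - q| ≤ |S|^n · max |p - q|`.
-/

open scoped ENNReal
open Finset

namespace PMF

variable {α : Type*} [Fintype α]

theorem sum_coe_eq_one (p : PMF α) : ∑ a, p a = 1 := by
  rw [← p.tsum_coe, tsum_fintype]

/-- Truncated subtraction makes this `∑ₐ (p a - q a)₊`. -/
noncomputable def tvDist (p q : PMF α) : ℝ≥0∞ := ∑ a, (p a - q a)

theorem tvDist_ne_top (p q : PMF α) : tvDist p q ≠ ∞ :=
  ne_top_of_le_ne_top ENNReal.one_ne_top
    ((sum_le_sum fun _ _ => tsub_le_self).trans_eq p.sum_coe_eq_one)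

theorem tsub_le_tvDist (p q : PMF α) (a : α) : p a - q a ≤ tvDist p q :=
  single_le_sum (f := fun a => p a - q a) (fun _ _ => zero_le) (mem_univ a)

theorem tvDist_comm (p q : PMF α) : tvDist p q = tvDist q p := by
  have hmin : ∑ a, min (p a) (q a) ≠ ∞ :=
    ne_top_of_le_ne_top ENNReal.one_ne_top
      ((sum_le_sum fun _ _ => min_le_left _ _).trans_eq p.sum_coe_eq_one)
  rw [tvDist, tvDist, ← ENNReal.add_left_inj hmin, ← sum_add_distrib, ← sum_add_distrib]
  simp only [tsub_add_min, sum_coe_eq_one]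
  simp only [min_comm (p _), tsub_add_min, sum_coe_eq_one]

theorem toReal_tvDist_le (p q : PMF α) :
    (tvDist p q).toReal ≤ ∑ a, |(p a).toReal - (q a).toReal| := by
  rw [tvDist, ENNReal.toReal_sum fun a _ => ne_top_of_le_ne_top (p.apply_ne_top a) tsub_le_self]
  refine sum_le_sum fun a _ => ?_
  rcases le_total (p a) (q a) with h | h
  · simp [tsub_eq_zero_of_le h]
  · rw [ENNReal.toReal_sub_of_le h (p.apply_ne_top a)]
    exact le_abs_self _

theorem sum_ite_toReal {β : Type*} [Fintype β] (r : PMF (α × β)) (R : α → β → Prop)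
    [DecidableRel R] :
    ∑ a, ∑ b, (if R a b then (r (a, b)).toReal else 0) =
      (∑ a, ∑ b, if R a b then r (a, b) else 0).toReal := by
  have hfin : ∀ a b, (if R a b then r (a, b) else 0) ≠ ∞ := fun a b => by
    split_ifs <;> simp [r.apply_ne_top]
  rw [ENNReal.toReal_sum fun a _ => ENNReal.sum_ne_top.2 fun b _ => hfin a b]
  refine sum_congr rfl fun a _ => ?_
  rw [ENNReal.toReal_sum fun b _ => hfin a b]
  exact sum_congr rfl fun b _ => by split_ifs <;> rfl

theorem sum_excess_mul_excess_div (p q : PMF α) (a : α) :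
    ∑ b, (p a - q a) * (q b - p b) / tvDist p q = p a - q a := by
  simp only [div_eq_mul_inv, ← sum_mul, ← mul_sum]
  rw [← tvDist, ← tvDist_comm, ← div_eq_mul_inv]
  -- when `tvDist p q = 0` the excess `p a - q a` vanishes as well, so the junk `0 / 0` is harmless
  exact ENNReal.mul_div_cancel_right'
    (fun h => le_zero_iff.1 (h ▸ tsub_le_tvDist p q a)) (absurd · (tvDist_ne_top p q))

variable [DecidableEq α]

noncomputable def maximalCouplingFun (p q : PMF α) (z : α × α) : ℝ≥0∞ :=
  (if z.1 = z.2 then min (p z.1) (q z.1) else 0) +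
    (p z.1 - q z.1) * (q z.2 - p z.2) / tvDist p q

theorem maximalCouplingFun_swap (p q : PMF α) (z : α × α) :
    maximalCouplingFun q p z.swap = maximalCouplingFun p q z := by
  obtain ⟨a, b⟩ := z
  by_cases h : a = b
  · subst h; simp [maximalCouplingFun, min_comm, mul_comm, tvDist_comm]
  · simp [maximalCouplingFun, h, Ne.symm h, mul_comm, tvDist_comm]

theorem sum_maximalCouplingFun_left (p q : PMF α) (a : α) :
    ∑ b, maximalCouplingFun p q (a, b) = p a := by
  simp only [maximalCouplingFun, sum_add_distrib, sum_ite_eq, mem_univ, if_true,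
    sum_excess_mul_excess_div]
  rw [add_comm, tsub_add_min]

theorem sum_maximalCouplingFun_right (p q : PMF α) (b : α) :
    ∑ a, maximalCouplingFun p q (a, b) = q b := by
  rw [← sum_maximalCouplingFun_left q p b]
  exact sum_congr rfl fun a _ => (maximalCouplingFun_swap p q (a, b)).symm

noncomputable def maximalCoupling (p q : PMF α) : PMF (α × α) :=
  ofFintype (maximalCouplingFun p q) <| by
    rw [Fintype.sum_prod_type]
    simp only [sum_maximalCouplingFun_left, sum_coe_eq_one]

theorem sum_maximalCoupling_left (p q : PMF α) (a : α) :
    ∑ b, maximalCoupling p q (a, b) = p a :=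
  sum_maximalCouplingFun_left p q a

theorem sum_maximalCoupling_right (p q : PMF α) (b : α) :
    ∑ a, maximalCoupling p q (a, b) = q b :=
  sum_maximalCouplingFun_right p q b

theorem sum_ite_maximalCoupling_le_tvDist (p q : PMF α) (R : α → α → Prop) [DecidableRel R]
    (hR : ∀ a b, R a b → a ≠ b) :
    ∑ a, ∑ b, (if R a b then maximalCoupling p q (a, b) else 0) ≤ tvDist p q :=
  calc ∑ a, ∑ b, (if R a b then maximalCoupling p q (a, b) else 0)
      ≤ ∑ a, ∑ b, (p a - q a) * (q b - p b) / tvDist p q := by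
        gcongr with a _ b _
        split_ifs with h
        · simp [maximalCoupling, maximalCouplingFun, hR a b h]
        · exact zero_le
    _ = tvDist p q := by simp only [sum_excess_mul_excess_div]; rfl

end PMF

open PMF in
/-- Coupling lemma with a total-variation bound expressed via the sup-distance:
any two pmfs `p q` on `Fin n → S` admit a coupling `r` whose marginals are `p` and `q`
and in which the probability of disagreement is at most `|S|^n` times the maximum
pointwise difference of `p` and `q`; a fortiori the same bound holds coordinatewise. -/
theorem coupling_sup_distance_bound
    {S : Type*} [Fintype S] [Nonempty S] [DecidableEq S] (n : ℕ)
    (p q : PMF (Fin n → S)) :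
    ∃ r : PMF ((Fin n → S) × (Fin n → S)),
      (∀ x : Fin n → S, ∑ y : Fin n → S, r (x, y) = p x) ∧
      (∀ y : Fin n → S, ∑ x : Fin n → S, r (x, y) = q y) ∧
      ((∑ x : Fin n → S, ∑ y : Fin n → S,
          (if x ≠ y then (r (x, y)).toReal else 0))
        ≤ (Fintype.card S : ℝ) ^ n *
            Finset.univ.sup' Finset.univ_nonempty
              (fun α : Fin n → S => |(p α).toReal - (q α).toReal|)) ∧
      (∀ i : Fin n,
        (∑ x : Fin n → S, ∑ y : Fin n → S,
            (if x i ≠ y i then (r (x, y)).toReal else 0))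
          ≤ (Fintype.card S : ℝ) ^ n *
              Finset.univ.sup' Finset.univ_nonempty
                (fun α : Fin n → S => |(p α).toReal - (q α).toReal|)) := by
  set M := Finset.univ.sup' Finset.univ_nonempty
    (fun α : Fin n → S => |(p α).toReal - (q α).toReal|)
  have htv : (tvDist p q).toReal ≤ (Fintype.card S : ℝ) ^ n * M :=
    calc (tvDist p q).toReal ≤ ∑ α, |(p α).toReal - (q α).toReal| := toReal_tvDist_le p q
      _ ≤ Fintype.card (Fin n → S) • M :=
        sum_le_card_nsmul _ _ _ fun α _ =>
          le_sup' (fun α => |(p α).toReal - (q α).toReal|) (mem_univ α)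
      _ = (Fintype.card S : ℝ) ^ n * M := by simp
  have hbound (R : (Fin n → S) → (Fin n → S) → Prop) [DecidableRel R]
      (hR : ∀ x y, R x y → x ≠ y) :
      ∑ x, ∑ y, (if R x y then (maximalCoupling p q (x, y)).toReal else 0) ≤
        (Fintype.card S : ℝ) ^ n * M := by
    rw [sum_ite_toReal]
    exact (ENNReal.toReal_mono (tvDist_ne_top p q)
      (sum_ite_maximalCoupling_le_tvDist p q R hR)).trans htv
  exact ⟨maximalCoupling p q, sum_maximalCoupling_left p q, sum_maximalCoupling_right p q,
    hbound _ fun _ _ => id, fun i => hbound _ fun x y h hxy => h (congrFun hxy i)⟩
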